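/- arXiv:1111.2520 — 5 statements merged into one kernel-verified Lean document; each statement's English description precedes it below -/
import Mathlib

section
/- Let Ω be a finite sample space with probability measure Pr, let E be an event, and let A₁,…,Aₙ be pairwise disjoint events whose union contains E. Define Eᵢ = E ∩ Aᵢ and define the random variable Y(ω) = Pr[Eᵢ]/Pr[Aᵢ] for ω ∈ Eᵢ (and Y(ω)=0 for ω outside E). Then Pr[E | A₁ ∪ ⋯ ∪ Aₙ] ≤ E[Y | E]. -/
/-!
Splitting along the disjoint `Aᵢ` gives `Pr[E] = ∑ Pr[Eᵢ]` and `Pr[⋃ Aᵢ] = ∑ Pr[Aᵢ]`. The claim is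
then the Engel form of Cauchy–Schwarz, `(∑ eᵢ)² / ∑ aᵢ ≤ ∑ eᵢ² / aᵢ`, divided by `∑ eᵢ`.
-/

open Finset

theorem Finset.sum_eq_sum_sum_inter_of_subset_biUnion {ι α M : Type*} [DecidableEq α]
    [AddCommMonoid M] {s : Finset ι} {A : ι → Finset α} (hA : (s : Set ι).PairwiseDisjoint A)
    {E : Finset α} (hE : E ⊆ s.biUnion A) (f : α → M) :
    ∑ x ∈ E, f x = ∑ i ∈ s, ∑ x ∈ E ∩ A i, f x := by
  rw [← sum_biUnion (hA.mono fun _ => inter_subset_right), ← inter_biUnion, inter_eq_left.2 hE]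

theorem Finset.sum_div_sum_le_sum_sq_div_mul_sum {ι R : Type*} [Field R] [LinearOrder R]
    [IsStrictOrderedRing R] (s : Finset ι) {e a : ι → R} (ha : ∀ i ∈ s, 0 < a i)
    (he : 0 ≤ ∑ i ∈ s, e i) :
    (∑ i ∈ s, e i) / ∑ i ∈ s, a i ≤ ∑ i ∈ s, e i ^ 2 / (a i * ∑ i ∈ s, e i) :=
  calc (∑ i ∈ s, e i) / ∑ i ∈ s, a i
      = ((∑ i ∈ s, e i) ^ 2 / ∑ i ∈ s, a i) / ∑ i ∈ s, e i := by
        rw [div_right_comm, sq, mul_self_div_self]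
    _ ≤ (∑ i ∈ s, e i ^ 2 / a i) / ∑ i ∈ s, e i :=
        div_le_div_of_nonneg_right (sq_sum_div_le_sum_sq_div s e ha) he
    _ = ∑ i ∈ s, e i ^ 2 / (a i * ∑ i ∈ s, e i) := by simp only [sum_div, div_div]

theorem stmt_0_general {Ω : Type*} [DecidableEq Ω] (w : Ω → ℝ)
    (n : ℕ) (E : Finset Ω) (A : Fin n → Finset Ω)
    (hdisj : ∀ i j, i ≠ j → Disjoint (A i) (A j))
    (hsub : E ⊆ Finset.univ.biUnion A)
    (hA : ∀ i, 0 < ∑ ω ∈ A i, w ω)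
    (hE : 0 < ∑ ω ∈ E, w ω) :
    (∑ ω ∈ E, w ω) / (∑ ω ∈ Finset.univ.biUnion A, w ω) ≤
      ∑ i, (∑ ω ∈ E ∩ A i, w ω) ^ 2 / ((∑ ω ∈ A i, w ω) * (∑ ω ∈ E, w ω)) := by
  have hpd : ((univ : Finset (Fin n)) : Set (Fin n)).PairwiseDisjoint A :=
    fun i _ j _ hij => hdisj i j hij
  have hEsplit := sum_eq_sum_sum_inter_of_subset_biUnion hpd hsub w
  rw [hEsplit] at hE ⊢
  rw [sum_biUnion hpd]
  exact sum_div_sum_le_sum_sq_div_mul_sum univ (fun i _ => hA i) hE.le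

/-- Lemma 1 (conditional-probability lower bound): for a finite probability space with
nonnegative weights `w`, an event `E`, and pairwise disjoint events `A i` whose union
contains `E`, the conditional probability of `E` given `⋃ i, A i` is at most the
conditional expectation given `E` of the random variable `Y(ω) = Pr[E ∩ A i]/Pr[A i]`
(for `ω ∈ E ∩ A i`), which equals `∑ i, Pr[E ∩ A i]² / (Pr[A i] · Pr[E])`. -/
theorem stmt_0 {Ω : Type*} [Fintype Ω] [DecidableEq Ω] (w : Ω → ℝ) (hw : ∀ ω, 0 ≤ w ω)
    (n : ℕ) (E : Finset Ω) (A : Fin n → Finset Ω)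
    (hdisj : ∀ i j, i ≠ j → Disjoint (A i) (A j))
    (hsub : E ⊆ Finset.univ.biUnion A)
    (hA : ∀ i, 0 < ∑ ω ∈ A i, w ω)
    (hE : 0 < ∑ ω ∈ E, w ω) :
    (∑ ω ∈ E, w ω) / (∑ ω ∈ Finset.univ.biUnion A, w ω) ≤
      ∑ i, (∑ ω ∈ E ∩ A i, w ω) ^ 2 / ((∑ ω ∈ A i, w ω) * (∑ ω ∈ E, w ω)) :=
  stmt_0_general w n E A hdisj hsub hA hE
end

section
/- Let X be a random variable over finite configurations, let D be the event that user u chose destination d (with prior Pr[D] = p), and let the adversary's observation partition the sample space into indistinguishability classes. Define Ψ(ω) = Pr[D | class of ω]. Then E[Ψ | D] ≥ p. In particular, for the onion-routing black-box model with compromise fraction b ∈ [0,1], E[Ψ | X_D(u)=d] ≥ b² + (1−b²)·p^u_d. -/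
/-!
The posterior `Ψ` is constant on the classes of the observation `f` and averages `1_D` over
each class, so `E[Ψ g(f)] = E[1_D g(f)]` for every function `g` of the observation. Taking
`g = Ψ` and `g = 1` gives `E[Ψ 1_D] = E[Ψ²] ≥ E[Ψ]² = Pr[D]²` by Cauchy–Schwarz, that is
`E[Ψ | D] ≥ Pr[D]`; the same argument works on any event determined by the observation.

In the onion-routing model user `u` is linked (input and output both observed) with probability
`b²`, and then the adversary sees `u`'s destination, so `Ψ = 1` there. Not being linked is an
observable event independent of `u`'s destination, so on it the conditional bound gives
`E[Ψ 1_D; not linked] ≥ p²(1 - b²)`, where `p = p^u_d`. Adding `E[Ψ 1_D; linked] = p b²` and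
dividing by `p` yields `b² + (1 - b²) p`.
-/

/-- A configuration: each user's destination, whether each user's input is observed,
and whether each user's output is observed. -/
abbrev Config (n : ℕ) (Δ : Type) : Type := (Fin n → Δ) × (Fin n → Bool) × (Fin n → Bool)

/-- Probability of a configuration: users pick destinations independently according to
`p`, and each input/output is independently observed with probability `b`. -/
def weight {n : ℕ} {Δ : Type} (p : Fin n → Δ → ℝ) (b : ℝ) (C : Config n Δ) : ℝ :=
  (∏ v, p v (C.1 v)) * (∏ v, if C.2.1 v then b else 1 - b) *
    (∏ v, if C.2.2 v then b else 1 - b)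

/-- The adversary's observation of a configuration: which users' inputs are observed,
the linked destination of each user whose input and output are both observed, and the
multiset of observed destinations not linked to an observed input. -/
def obs {n : ℕ} {Δ : Type} [Fintype Δ] [DecidableEq Δ] (C : Config n Δ) :
    (Fin n → Bool) × (Fin n → Option Δ) × Multiset Δ :=
  (C.2.1,
   fun v => if C.2.1 v && C.2.2 v then some (C.1 v) else none,
   (Finset.univ.filter fun v => C.2.1 v = false ∧ C.2.2 v = true).val.map C.1)

/-- The posterior probability `Ψ` that user `u` chose destination `d`, given the
adversary's observation (i.e., given the indistinguishability class of `C`). -/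
noncomputable def post {n : ℕ} {Δ : Type} [Fintype Δ] [DecidableEq Δ]
    (p : Fin n → Δ → ℝ) (b : ℝ) (u : Fin n) (d : Δ) (C : Config n Δ) : ℝ :=
  (∑ C' ∈ Finset.univ.filter (fun C' : Config n Δ => obs C' = obs C ∧ C'.1 u = d),
      weight p b C') /
  (∑ C' ∈ Finset.univ.filter (fun C' : Config n Δ => obs C' = obs C), weight p b C')

/-- The expected posterior probability `E[Ψ | X_D(u) = d]`. -/
noncomputable def expPost {n : ℕ} {Δ : Type} [Fintype Δ] [DecidableEq Δ]
    (p : Fin n → Δ → ℝ) (b : ℝ) (u : Fin n) (d : Δ) : ℝ :=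
  (∑ C ∈ Finset.univ.filter (fun C : Config n Δ => C.1 u = d),
      weight p b C * post p b u d C) /
  (∑ C ∈ Finset.univ.filter (fun C : Config n Δ => C.1 u = d), weight p b C)

open Finset

section Posterior

variable {Ω κ : Type} [Fintype Ω] [DecidableEq κ] {w : Ω → ℝ} (D : Finset Ω) (f : Ω → κ)

variable (w) in
/-- `Pr[D | f = c]` under the weights `w`, with the junk value `0` on a null class. -/
noncomputable def posterior (c : κ) : ℝ :=
  (∑ ω ∈ D with f ω = c, w ω) / ∑ ω with f ω = c, w ω

lemma posterior_nonneg (hw : ∀ ω, 0 ≤ w ω) (c : κ) : 0 ≤ posterior w D f c :=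
  div_nonneg (sum_nonneg fun _ _ => hw _) (sum_nonneg fun _ _ => hw _)

lemma sum_mul_posterior (hw : ∀ ω, 0 ≤ w ω) (g : κ → ℝ) :
    ∑ ω, w ω * (g (f ω) * posterior w D f (f ω)) = ∑ ω ∈ D, w ω * g (f ω) := by
  have hmaps : ∀ s : Finset Ω, ∀ ω ∈ s, f ω ∈ univ.image f :=
    fun _ ω _ => mem_image_of_mem f (mem_univ ω)
  rw [← sum_fiberwise_of_maps_to (hmaps univ), ← sum_fiberwise_of_maps_to (hmaps D)]
  refine sum_congr rfl fun c _ => ?_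
  have hclass : ∀ s : Finset Ω, ∀ F : κ → ℝ,
      ∑ ω ∈ s with f ω = c, w ω * F (f ω) = (∑ ω ∈ s with f ω = c, w ω) * F c := by
    intro s F
    rw [sum_mul]
    exact sum_congr rfl fun ω hω => by rw [(mem_filter.1 hω).2]
  have hnull : (∑ ω with f ω = c, w ω) = 0 → (∑ ω ∈ D with f ω = c, w ω) = 0 := by
    intro h
    refine le_antisymm ?_ (sum_nonneg fun _ _ => hw _)
    exact h ▸ sum_le_sum_of_subset_of_nonneg (filter_subset_filter _ (subset_univ D))
      fun _ _ _ => hw _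
  rw [hclass univ fun c => g c * posterior w D f c, hclass D g, posterior, mul_left_comm,
    mul_div_cancel_of_imp' hnull, mul_comm]

lemma sum_filter_mul_posterior (hw : ∀ ω, 0 ≤ w ω) (S : κ → Prop) [DecidablePred S]
    (g : κ → ℝ) :
    ∑ ω with S (f ω), w ω * (g (f ω) * posterior w D f (f ω)) =
      ∑ ω ∈ D with S (f ω), w ω * g (f ω) := by
  simpa only [sum_filter, ite_mul, zero_mul, mul_ite, mul_zero] using
    sum_mul_posterior D f hw fun c => if S c then g c else 0

lemma sum_filter_mul_posterior_of_subset (hw : ∀ ω, 0 ≤ w ω) (S : κ → Prop)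
    [DecidablePred S] (hSD : ∀ ω, S (f ω) → ω ∈ D) :
    ∑ ω ∈ D with S (f ω), w ω * posterior w D f (f ω) = ∑ ω ∈ D with S (f ω), w ω := by
  have hfilter : (univ.filter fun ω => S (f ω)) = D.filter fun ω => S (f ω) := by
    ext ω
    simpa using hSD ω
  simpa [← hfilter] using sum_filter_mul_posterior D f hw S fun _ => 1

lemma sq_sum_filter_le_mul_sum_mul_posterior (hw : ∀ ω, 0 ≤ w ω) (S : κ → Prop)
    [DecidablePred S] :
    (∑ ω ∈ D with S (f ω), w ω) ^ 2 ≤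
      (∑ ω with S (f ω), w ω) * ∑ ω ∈ D with S (f ω), w ω * posterior w D f (f ω) := by
  have hmean := sum_filter_mul_posterior D f hw S fun _ => 1
  have hsq := sum_filter_mul_posterior D f hw S (posterior w D f)
  simp only [one_mul, mul_one] at hmean
  rw [← hmean, ← hsq]
  refine sum_sq_le_sum_mul_sum_of_sq_le_mul _ (fun ω _ => hw ω)
    (fun ω _ => mul_nonneg (hw ω) (mul_self_nonneg _)) fun ω _ => le_of_eq (by ring)

end Posterior

lemma sum_apply_eval_mul_prod {ι A : Type} [Fintype ι] [DecidableEq ι] [Fintype A]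
    (g : ι → A → ℝ) (u : ι) (hg : ∀ v ≠ u, ∑ a, g v a = 1) (G : A → ℝ) :
    ∑ x : ι → A, G (x u) * ∏ v, g v (x v) = ∑ a, G a * g u a := by
  set h : ι → A → ℝ := fun v a => if v = u then G a * g v a else g v a
  have hne : ∀ v ∈ ({u}ᶜ : Finset ι), v ≠ u := fun v hv => mem_compl.1 hv ∘ mem_singleton.2
  have hprod : ∀ x : ι → A, G (x u) * ∏ v, g v (x v) = ∏ v, h v (x v) := by
    intro x
    rw [Fintype.prod_eq_mul_prod_compl u, Fintype.prod_eq_mul_prod_compl u (fun v => h v (x v)),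
      prod_congr rfl fun v hv => if_neg (hne v hv)]
    simp only [h, if_pos rfl, mul_assoc]
  rw [sum_congr rfl fun x _ => hprod x, ← Fintype.prod_sum, Fintype.prod_eq_mul_prod_compl u,
    prod_eq_one fun v hv => by simpa only [h, if_neg (hne v hv)] using hg v (hne v hv)]
  simp only [h, if_pos rfl, mul_one]

lemma sum_filter_eval_prod {ι A : Type} [Fintype ι] [DecidableEq ι] [Fintype A] [DecidableEq A]
    (g : ι → A → ℝ) (u : ι) (hg : ∀ v ≠ u, ∑ a, g v a = 1) (s : Finset A) :
    ∑ x : ι → A with x u ∈ s, ∏ v, g v (x v) = ∑ a ∈ s, g u a := by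
  simpa only [sum_filter, boole_mul, sum_ite_mem, univ_inter] using
    sum_apply_eval_mul_prod g u hg fun a => if a ∈ s then 1 else 0

section Onion

variable {n : ℕ} {Δ : Type} {p : Fin n → Δ → ℝ} {b : ℝ}

lemma weight_nonneg (hb0 : 0 ≤ b) (hb1 : b ≤ 1) (hp : ∀ v δ, 0 ≤ p v δ) (C : Config n Δ) :
    0 ≤ weight p b C := by
  have hcoin : ∀ t : Bool, 0 ≤ if t then b else 1 - b := fun t => by
    cases t <;> simp [hb0, hb1]
  exact mul_nonneg (mul_nonneg (prod_nonneg fun v _ => hp v _) (prod_nonneg fun v _ => hcoin _))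
    (prod_nonneg fun v _ => hcoin _)

variable [Fintype Δ] [DecidableEq Δ]

lemma sum_coin : ∑ t : Bool, (if t then b else 1 - b) = 1 := by
  simp

lemma sum_weight_eq_prod (hpsum : ∀ v, ∑ δ, p v δ = 1) (u : Fin n) (A : Finset Δ)
    (I O : Finset Bool) (E : Config n Δ → Prop) [DecidablePred E]
    (hE : ∀ C, E C ↔ C.1 u ∈ A ∧ C.2.1 u ∈ I ∧ C.2.2 u ∈ O) :
    ∑ C with E C, weight p b C =
      (∑ δ ∈ A, p u δ) * (∑ i ∈ I, if i then b else 1 - b) * ∑ o ∈ O, if o then b else 1 - b := by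
  have hevent : univ.filter E =
      (univ.filter fun x : Fin n → Δ => x u ∈ A) ×ˢ
        (univ.filter fun y : Fin n → Bool => y u ∈ I) ×ˢ
          (univ.filter fun z : Fin n → Bool => z u ∈ O) := by
    ext C
    simp [hE]
  have hcoin := sum_filter_eval_prod (fun (_ : Fin n) (t : Bool) => if t then b else 1 - b) u
    fun _ _ => sum_coin
  rw [hevent, ← hcoin I, ← hcoin O, ← sum_filter_eval_prod p u (fun v _ => hpsum v) A,
    mul_assoc, sum_mul_sum, sum_mul_sum]
  simp only [sum_product, mul_sum]
  exact sum_congr rfl fun x _ => sum_congr rfl fun y _ => sum_congr rfl fun z _ => mul_assoc _ _ _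

lemma obs_link_eq_some (C : Config n Δ) {u : Fin n} {δ : Δ} :
    (obs C).2.1 u = some δ ↔ C.2.1 u = true ∧ C.2.2 u = true ∧ C.1 u = δ := by
  simp [obs, and_assoc]

lemma obs_link_eq_none (C : Config n Δ) {u : Fin n} :
    (obs C).2.1 u = none ↔ ¬(C.2.1 u = true ∧ C.2.2 u = true) := by
  simp [obs]

lemma sum_weight_dest (hpsum : ∀ v, ∑ δ, p v δ = 1) (u : Fin n) (d : Δ) :
    ∑ C : Config n Δ with C.1 u = d, weight p b C = p u d := by
  rw [sum_weight_eq_prod hpsum u {d} univ univ _ fun C => by simp]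
  simp only [sum_singleton, sum_coin, mul_one]

lemma sum_weight_dest_linked (hpsum : ∀ v, ∑ δ, p v δ = 1) (u : Fin n) (d : Δ) :
    ∑ C ∈ (univ.filter fun C : Config n Δ => C.1 u = d) with (obs C).2.1 u = some d,
      weight p b C = p u d * b ^ 2 := by
  rw [filter_filter, sum_weight_eq_prod hpsum u {d} {true} {true} _
    fun C => by simp only [obs_link_eq_some, mem_singleton]; tauto]
  simp only [sum_singleton, ↓reduceIte]
  ring

lemma sum_weight_unlinked (hpsum : ∀ v, ∑ δ, p v δ = 1) (u : Fin n) :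
    ∑ C : Config n Δ with (obs C).2.1 u = none, weight p b C = 1 - b ^ 2 := by
  have htotal := sum_weight_eq_prod (b := b) hpsum u univ univ univ (fun _ => True) fun C => by simp
  have hlinked := sum_weight_eq_prod (b := b) hpsum u univ {true} {true}
    (fun C => ¬(obs C).2.1 u = none) fun C => by simp [obs_link_eq_none]
  rw [filter_true_of_mem fun _ _ => trivial, hpsum, sum_coin] at htotal
  simp only [hpsum, sum_singleton, ↓reduceIte, one_mul] at hlinked
  linarith [sum_filter_add_sum_filter_not univ (fun C : Config n Δ => (obs C).2.1 u = none)
    (weight p b)]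

lemma sum_dest_eq_linked_add_unlinked (u : Fin n) (d : Δ) (G : Config n Δ → ℝ) :
    ∑ C : Config n Δ with C.1 u = d, G C =
      ∑ C ∈ (univ.filter fun C : Config n Δ => C.1 u = d) with (obs C).2.1 u = some d, G C +
      ∑ C ∈ (univ.filter fun C : Config n Δ => C.1 u = d) with (obs C).2.1 u = none, G C := by
  rw [← sum_filter_add_sum_filter_not _ fun C => (obs C).2.1 u = some d]
  congr 2
  refine filter_congr fun C hC => ?_
  rw [obs_link_eq_some, obs_link_eq_none, (mem_filter.1 hC).2]
  simp

lemma sum_weight_dest_unlinked (hpsum : ∀ v, ∑ δ, p v δ = 1) (u : Fin n) (d : Δ) :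
    ∑ C ∈ (univ.filter fun C : Config n Δ => C.1 u = d) with (obs C).2.1 u = none,
      weight p b C = p u d * (1 - b ^ 2) := by
  have h := sum_dest_eq_linked_add_unlinked u d (weight p b)
  rw [sum_weight_dest hpsum, sum_weight_dest_linked hpsum] at h
  linarith

lemma expPost_eq (hpsum : ∀ v, ∑ δ, p v δ = 1) (u : Fin n) (d : Δ) :
    expPost p b u d = (∑ C : Config n Δ with C.1 u = d,
      weight p b C * posterior (weight p b) (univ.filter fun C' : Config n Δ => C'.1 u = d)
        obs (obs C)) / p u d := by
  rw [expPost, sum_weight_dest hpsum]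
  simp only [post, posterior, filter_filter, and_comm]

theorem le_expPost (hb0 : 0 ≤ b) (hb1 : b ≤ 1) (hp : ∀ v δ, 0 ≤ p v δ)
    (hpsum : ∀ v, ∑ δ, p v δ = 1) (u : Fin n) (d : Δ) (hpd : 0 < p u d) :
    b ^ 2 + (1 - b ^ 2) * p u d ≤ expPost p b u d := by
  rw [expPost_eq hpsum, le_div_iff₀ hpd]
  set D := univ.filter fun C : Config n Δ => C.1 u = d
  have hw := weight_nonneg hb0 hb1 hp
  have hlinked_sub : ∀ C : Config n Δ, (obs C).2.1 u = some d → C ∈ D :=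
    fun C hC => mem_filter.2 ⟨mem_univ C, ((obs_link_eq_some C).1 hC).2.2⟩
  have hlinked := sum_filter_mul_posterior_of_subset D obs hw (·.2.1 u = some d) hlinked_sub
  have hunlinked := sq_sum_filter_le_mul_sum_mul_posterior D obs hw (·.2.1 u = none)
  rw [sum_weight_dest_linked hpsum] at hlinked
  rw [sum_weight_dest_unlinked hpsum, sum_weight_unlinked hpsum] at hunlinked
  set ψ := posterior (weight p b) D obs
  have hY : (1 - b ^ 2) * p u d ^ 2 ≤
      ∑ C ∈ D with (obs C).2.1 u = none, weight p b C * ψ (obs C) := by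
    rcases (sub_nonneg.2 (pow_le_one₀ hb0 hb1)).eq_or_lt with hb | hb
    · rw [← hb, zero_mul]
      exact sum_nonneg fun C _ => mul_nonneg (hw C) (posterior_nonneg D obs hw _)
    · exact le_of_mul_le_mul_left (by linarith) hb
  rw [sum_dest_eq_linked_add_unlinked, hlinked]
  nlinarith [hY]

end Onion

/-- (i) In a finite probability space partitioned into indistinguishability classes by
an observation map `f`, the expected posterior probability of an event `D` conditioned
on `D` is at least its prior `pr`. (ii) In particular, in the black-box onion-routing
model with compromise fraction `b`, `E[Ψ | X_D(u)=d] ≥ b² + (1−b²)·p^u_d`. -/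
theorem stmt_2 :
    (∀ (Ω κ : Type) [Fintype Ω] [DecidableEq Ω] [DecidableEq κ]
      (w : Ω → ℝ), (∀ ω, 0 ≤ w ω) → (∑ ω, w ω) = 1 →
      ∀ (D : Finset Ω) (f : Ω → κ) (pr : ℝ), (∑ ω ∈ D, w ω) = pr → 0 < pr →
      pr ≤ (∑ ω ∈ D, w ω *
          ((∑ ω' ∈ D.filter (fun ω' => f ω' = f ω), w ω') /
            (∑ ω' ∈ Finset.univ.filter (fun ω' => f ω' = f ω), w ω'))) / pr) ∧
    (∀ (n : ℕ) (Δ : Type) [Fintype Δ] [DecidableEq Δ]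
      (p : Fin n → Δ → ℝ) (b : ℝ), 0 ≤ b → b ≤ 1 →
      (∀ v δ, 0 ≤ p v δ) → (∀ v, ∑ δ, p v δ = 1) →
      ∀ (u : Fin n) (d : Δ), 0 < p u d →
      b ^ 2 + (1 - b ^ 2) * p u d ≤ expPost p b u d) := by
  refine ⟨fun Ω κ _ _ _ w hw hsum D f pr hpr hpr_pos => ?_,
    fun n Δ _ _ p b hb0 hb1 hp hpsum u d hpd => le_expPost hb0 hb1 hp hpsum u d hpd⟩
  have h := sq_sum_filter_le_mul_sum_mul_posterior D f hw fun _ => True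
  rw [filter_true_of_mem fun _ _ => trivial, filter_true_of_mem fun _ _ => trivial, hsum, hpr,
    one_mul, sq] at h
  exact (le_div_iff₀ hpr_pos).2 h
end

section
/- A maximum of the expected posterior probability E[Ψ | X_D(u)=d], viewed as a function of the destination distributions (p^v)_{v≠u} of the other users, is attained at an extreme point where every user v ≠ u deterministically chooses a single destination d_v (i.e., p^v_{d_v} = 1). -/
namespace Stmt4Aux

variable {n : ℕ} {Δ : Type} [Fintype Δ] [DecidableEq Δ]

/-- Numerator of the class `o`. -/
noncomputable def Anum (b : ℝ) (u : Fin n) (d : Δ)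
    (o : (Fin n → Bool) × (Fin n → Option Δ) × Multiset Δ) (q : Fin n → Δ → ℝ) : ℝ :=
  ∑ C ∈ Finset.univ.filter (fun C : Config n Δ => obs C = o ∧ C.1 u = d), weight q b C

noncomputable def Bden (b : ℝ)
    (o : (Fin n → Bool) × (Fin n → Option Δ) × Multiset Δ) (q : Fin n → Δ → ℝ) : ℝ :=
  ∑ C ∈ Finset.univ.filter (fun C : Config n Δ => obs C = o), weight q b C

noncomputable def Nfun (b : ℝ) (u : Fin n) (d : Δ) (q : Fin n → Δ → ℝ) : ℝ :=
  ∑ C ∈ Finset.univ.filter (fun C : Config n Δ => C.1 u = d),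
      weight q b C * post q b u d C

lemma weight_nonneg (q : Fin n → Δ → ℝ) (hq : ∀ v δ, 0 ≤ q v δ) {b : ℝ}
    (hb0 : 0 ≤ b) (hb1 : b ≤ 1) (C : Config n Δ) : 0 ≤ weight q b C := by
  unfold weight
  have h1 : (0:ℝ) ≤ ∏ v, q v (C.1 v) := Finset.prod_nonneg fun v _ => hq v _
  have h2 : (0:ℝ) ≤ ∏ v, if C.2.1 v then b else 1 - b :=
    Finset.prod_nonneg fun v _ => by split <;> linarith
  have h3 : (0:ℝ) ≤ ∏ v, if C.2.2 v then b else 1 - b :=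
    Finset.prod_nonneg fun v _ => by split <;> linarith
  positivity

lemma weight_update (q : Fin n → Δ → ℝ) (v : Fin n) (x : Δ → ℝ) (b : ℝ) (C : Config n Δ) :
    weight (Function.update q v x) b C =
      x (C.1 v) * ((∏ w ∈ Finset.univ \ {v}, q w (C.1 w)) *
        (∏ w, if C.2.1 w then b else 1 - b) * (∏ w, if C.2.2 w then b else 1 - b)) := by
  unfold weight
  have h : ∏ w, Function.update q v x w (C.1 w)
      = x (C.1 v) * ∏ w ∈ Finset.univ \ {v}, q w (C.1 w) := by
    calc ∏ w, Function.update q v x w (C.1 w)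
        = ∏ w, Function.update (fun w => q w (C.1 w)) v (x (C.1 v)) w := by
          refine Finset.prod_congr rfl fun w _ => ?_
          rcases eq_or_ne w v with rfl | hw
          · simp
          · simp [Function.update_of_ne hw]
      _ = x (C.1 v) * ∏ w ∈ Finset.univ \ {v}, q w (C.1 w) :=
          Finset.prod_update_of_mem (Finset.mem_univ v) _ _
  rw [h]; ring

/-- Linearity of a sum of weights in one coordinate. -/
lemma sum_weight_update_lin (s : Finset (Config n Δ)) (q : Fin n → Δ → ℝ) (v : Fin n)
    (t r : ℝ) (x y : Δ → ℝ) (b : ℝ) :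
    ∑ C ∈ s, weight (Function.update q v (t • x + r • y)) b C
      = t * ∑ C ∈ s, weight (Function.update q v x) b C
        + r * ∑ C ∈ s, weight (Function.update q v y) b C := by
  rw [Finset.mul_sum, Finset.mul_sum, ← Finset.sum_add_distrib]
  refine Finset.sum_congr rfl fun C _ => ?_
  rw [weight_update, weight_update, weight_update]
  have : (t • x + r • y) (C.1 v) = t * x (C.1 v) + r * y (C.1 v) := by
    simp [smul_eq_mul]
  rw [this]; ring

lemma Anum_le_Bden (b : ℝ) (hb0 : 0 ≤ b) (hb1 : b ≤ 1) (u : Fin n) (d : Δ) (o)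
    (q : Fin n → Δ → ℝ) (hq : ∀ v δ, 0 ≤ q v δ) :
    Anum b u d o q ≤ Bden b o q := by
  refine Finset.sum_le_sum_of_subset_of_nonneg ?_ fun C _ _ => weight_nonneg q hq hb0 hb1 C
  intro C hC
  simp only [Finset.mem_filter] at hC ⊢
  exact ⟨hC.1, hC.2.1⟩

lemma Anum_nonneg (b : ℝ) (hb0 : 0 ≤ b) (hb1 : b ≤ 1) (u : Fin n) (d : Δ) (o)
    (q : Fin n → Δ → ℝ) (hq : ∀ v δ, 0 ≤ q v δ) : 0 ≤ Anum b u d o q :=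
  Finset.sum_nonneg fun C _ => weight_nonneg q hq hb0 hb1 C

/-- Grouping the numerator by observation classes. -/
lemma Nfun_eq (b : ℝ) (u : Fin n) (d : Δ) (q : Fin n → Δ → ℝ) :
    Nfun b u d q = ∑ o ∈ Finset.univ.image (obs (n := n) (Δ := Δ)),
      (Anum b u d o q)^2 / Bden b o q := by
  unfold Nfun
  rw [← Finset.sum_fiberwise_of_maps_to (g := obs)
    (fun C _ => Finset.mem_image_of_mem obs (Finset.mem_univ C))]
  refine Finset.sum_congr rfl fun o _ => ?_
  have hpost : ∀ C ∈ (Finset.univ.filter (fun C : Config n Δ => C.1 u = d)).filter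
      (fun C => obs C = o), post q b u d C = Anum b u d o q / Bden b o q := by
    intro C hC
    simp only [Finset.mem_filter] at hC
    unfold post Anum Bden
    rw [hC.2]
  rw [Finset.sum_congr rfl fun C hC => by rw [hpost C hC]]
  rw [← Finset.sum_mul]
  have : ∑ C ∈ (Finset.univ.filter (fun C : Config n Δ => C.1 u = d)).filter
      (fun C => obs C = o), weight q b C = Anum b u d o q := by
    unfold Anum
    rw [Finset.filter_filter]
    congr 1
    ext C
    simp [and_comm]
  rw [this]; ring

/-- The denominator of `expPost` equals `q u d`. -/
lemma denom_eq (b : ℝ) (u : Fin n) (d : Δ) (q : Fin n → Δ → ℝ)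
    (hqs : ∀ v, ∑ δ, q v δ = 1) :
    ∑ C ∈ Finset.univ.filter (fun C : Config n Δ => C.1 u = d), weight q b C = q u d := by
  have hbool : ∀ g : Fin n → Bool → ℝ, (∀ v, g v true + g v false = 1) →
      ∑ s : Fin n → Bool, ∏ v, g v (s v) = 1 := by
    intro g hg
    rw [← Fintype.piFinset_univ, ← Finset.prod_univ_sum]
    simp [hg]
  have hset : Finset.univ.filter (fun C : Config n Δ => C.1 u = d)
      = (Finset.univ.filter fun f : Fin n → Δ => f u = d) ×ˢ
        (Finset.univ : Finset ((Fin n → Bool) × (Fin n → Bool))) := by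
    ext ⟨f, s⟩; simp
  rw [hset, Finset.sum_product]
  have hw : ∀ (f : Fin n → Δ) (s : (Fin n → Bool) × (Fin n → Bool)),
      weight q b (f, s) = (∏ v, q v (f v)) *
        ((∏ v, if s.1 v then b else 1 - b) * (∏ v, if s.2 v then b else 1 - b)) := by
    intro f s; unfold weight; ring
  have hsum2 : ∀ f : Fin n → Δ,
      ∑ s : (Fin n → Bool) × (Fin n → Bool), weight q b (f, s) = ∏ v, q v (f v) := by
    intro f
    rw [Finset.sum_congr rfl fun s _ => hw f s, ← Finset.mul_sum]
    rw [Fintype.sum_prod_type]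
    have h1 : ∑ s1 : Fin n → Bool, ∑ s2 : Fin n → Bool,
        (∏ v, if s1 v then b else 1 - b) * (∏ v, if s2 v then b else 1 - b)
        = (∑ s1 : Fin n → Bool, ∏ v, if s1 v then b else 1 - b)
          * (∑ s2 : Fin n → Bool, ∏ v, if s2 v then b else 1 - b) := by
      rw [Finset.sum_mul_sum]
    rw [h1, hbool (fun _ t => if t then b else 1 - b) (fun v => by norm_num)]
    ring
  rw [Finset.sum_congr rfl fun f _ => hsum2 f]
  rw [Finset.sum_filter]
  have hr : ∀ f : Fin n → Δ, (if f u = d then ∏ v, q v (f v) else 0)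
      = ∏ v, (if v = u then (if f v = d then q u (f v) else 0) else q v (f v)) := by
    intro f
    by_cases h : f u = d
    · rw [if_pos h]
      refine Finset.prod_congr rfl fun w _ => ?_
      by_cases hw : w = u
      · subst hw; simp [h]
      · simp [hw]
    · rw [if_neg h]
      symm
      exact Finset.prod_eq_zero (Finset.mem_univ u) (by simp [h])
  rw [Finset.sum_congr rfl fun f _ => hr f, ← Fintype.piFinset_univ]
  rw [← Finset.prod_univ_sum (fun _ : Fin n => (Finset.univ : Finset Δ))
    (fun v δ => if v = u then (if δ = d then q u δ else 0) else q v δ)]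
  have hcol : ∀ v : Fin n, (∑ δ : Δ, if v = u then (if δ = d then q u δ else 0) else q v δ)
      = if v = u then q u d else 1 := by
    intro v
    by_cases hv : v = u
    · subst hv
      simp
    · simp only [if_neg hv]
      exact hqs v
  rw [Finset.prod_congr rfl fun v _ => hcol v]
  rw [Fintype.prod_eq_single u (fun v hv => if_neg hv)]
  simp

lemma key_scalar (a₁ a₂ b₁ b₂ t s : ℝ) (ht : 0 ≤ t) (hs : 0 ≤ s)
    (ha₁ : 0 ≤ a₁) (ha₂ : 0 ≤ a₂) (h₁ : a₁ ≤ b₁) (h₂ : a₂ ≤ b₂) :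
    (t*a₁+s*a₂)^2/(t*b₁+s*b₂) ≤ t*(a₁^2/b₁)+s*(a₂^2/b₂) := by
  have hb₁ : 0 ≤ b₁ := ha₁.trans h₁
  have hb₂ : 0 ≤ b₂ := ha₂.trans h₂
  rcases eq_or_lt_of_le hb₁ with hb₁0 | hb₁p
  · have ha₁0 : a₁ = 0 := le_antisymm (h₁.trans_eq hb₁0.symm) ha₁
    subst ha₁0
    rw [← hb₁0]
    rcases eq_or_lt_of_le hb₂ with hb₂0 | hb₂p
    · have ha₂0 : a₂ = 0 := le_antisymm (h₂.trans_eq hb₂0.symm) ha₂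
      subst ha₂0; simp [← hb₂0]
    · rcases eq_or_lt_of_le hs with hs0 | hsp
      · simp [← hs0]
      · have : (t*0+s*a₂)^2/(t*0+s*b₂) = s*(a₂^2/b₂) := by
          field_simp; ring
        rw [this]; simp [mul_nonneg ht (div_nonneg (sq_nonneg _) hb₂)]
  · rcases eq_or_lt_of_le hb₂ with hb₂0 | hb₂p
    · have ha₂0 : a₂ = 0 := le_antisymm (h₂.trans_eq hb₂0.symm) ha₂
      subst ha₂0
      rw [← hb₂0]
      rcases eq_or_lt_of_le ht with ht0 | htp
      · simp [← ht0]
      · have : (t*a₁+s*0)^2/(t*b₁+s*0) = t*(a₁^2/b₁) := by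
          field_simp; ring
        rw [this]; simp [mul_nonneg hs (div_nonneg (sq_nonneg _) hb₂)]
    · rcases eq_or_lt_of_le (add_nonneg (mul_nonneg ht hb₁) (mul_nonneg hs hb₂) :
        (0:ℝ) ≤ t*b₁+s*b₂) with hD | hD
      · have ht0 : t = 0 := by nlinarith
        have hs0 : s = 0 := by nlinarith
        simp [ht0, hs0]
      · rw [div_le_iff₀ hD]
        set r₁ := a₁^2/b₁ with hr₁def
        set r₂ := a₂^2/b₂ with hr₂def
        have hr₁ : r₁ * b₁ = a₁^2 := by rw [hr₁def]; field_simp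
        have hr₂ : r₂ * b₂ = a₂^2 := by rw [hr₂def]; field_simp
        have key2 : b₁*b₂*(r₁*b₂ + r₂*b₁ - 2*a₁*a₂) = (a₁*b₂-a₂*b₁)^2 := by
          rw [hr₁def, hr₂def]; field_simp; ring
        have key3 : 2*a₁*a₂ ≤ r₁*b₂ + r₂*b₁ := by
          nlinarith [key2, sq_nonneg (a₁*b₂-a₂*b₁), mul_pos hb₁p hb₂p]
        nlinarith [hr₁, hr₂, key3, mul_nonneg ht hs, sq_nonneg t, sq_nonneg s,
          mul_le_mul_of_nonneg_left key3 (mul_nonneg ht hs)]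

lemma step (b : ℝ) (hb0 : 0 ≤ b) (hb1 : b ≤ 1) (u : Fin n) (d : Δ)
    (q : Fin n → Δ → ℝ) (hq : ∀ w δ, 0 ≤ q w δ) (hqs : ∀ w, ∑ δ, q w δ = 1) (v : Fin n) :
    ∃ δ : Δ, Nfun b u d q ≤
      Nfun b u d (Function.update q v (fun j => if δ = j then (1:ℝ) else 0)) := by
  set F : (Δ → ℝ) → ℝ := fun x => ∑ o ∈ Finset.univ.image (obs (n:=n) (Δ:=Δ)),
    (Anum b u d o (Function.update q v x))^2 / Bden b o (Function.update q v x) with hF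
  have hupd_nonneg : ∀ x : Δ → ℝ, (∀ δ, 0 ≤ x δ) → ∀ w δ, 0 ≤ Function.update q v x w δ := by
    intro x hx w δ
    rcases eq_or_ne w v with rfl | hw
    · simpa using hx δ
    · simpa [Function.update_of_ne hw] using hq w δ
  have hconv : ConvexOn ℝ (stdSimplex ℝ Δ) F := by
    refine ⟨convex_stdSimplex ℝ Δ, ?_⟩
    intro x hx y hy t r ht hr htr
    rw [hF]
    simp only [smul_eq_mul]
    rw [Finset.mul_sum, Finset.mul_sum, ← Finset.sum_add_distrib]
    refine Finset.sum_le_sum fun o _ => ?_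
    have hA : Anum b u d o (Function.update q v (t • x + r • y))
        = t * Anum b u d o (Function.update q v x) + r * Anum b u d o (Function.update q v y) :=
      sum_weight_update_lin _ q v t r x y b
    have hB : Bden b o (Function.update q v (t • x + r • y))
        = t * Bden b o (Function.update q v x) + r * Bden b o (Function.update q v y) :=
      sum_weight_update_lin _ q v t r x y b
    rw [hA, hB]
    exact key_scalar _ _ _ _ t r ht hr
      (Anum_nonneg b hb0 hb1 u d o _ (hupd_nonneg x hx.1))
      (Anum_nonneg b hb0 hb1 u d o _ (hupd_nonneg y hy.1))
      (Anum_le_Bden b hb0 hb1 u d o _ (hupd_nonneg x hx.1))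
      (Anum_le_Bden b hb0 hb1 u d o _ (hupd_nonneg y hy.1))
  have hqv : q v ∈ convexHull ℝ (Set.range fun i j : Δ => if i = j then (1:ℝ) else 0) := by
    have h2 : Finset.univ.centerMass (q v) (fun δ j => if δ = j then (1:ℝ) else 0) = q v := by
      rw [Finset.centerMass_eq_of_sum_1 _ _ (hqs v)]
      funext j
      simp [Finset.sum_apply, mul_ite]
    rw [← h2]
    exact Finset.centerMass_mem_convexHull _ (fun i _ => hq v i)
      (by rw [hqs v]; norm_num) (fun i _ => Set.mem_range_self i)
  have hsub : (Set.range fun i j : Δ => if i = j then (1:ℝ) else 0) ⊆ stdSimplex ℝ Δ := by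
    rintro _ ⟨δ, rfl⟩
    refine ⟨fun j => ?_, by simp⟩
    dsimp only
    split <;> norm_num
  obtain ⟨y, hy, hle⟩ := hconv.exists_ge_of_mem_convexHull hsub hqv
  obtain ⟨δ, rfl⟩ := hy
  refine ⟨δ, ?_⟩
  have h1 : Nfun b u d q = F (q v) := by
    rw [Nfun_eq, hF]; simp only [Function.update_eq_self]
  rw [h1, Nfun_eq]
  exact hle

lemma allstep (b : ℝ) (hb0 : 0 ≤ b) (hb1 : b ≤ 1) (u : Fin n) (d : Δ) (S : Finset (Fin n)) :
    ∀ q : Fin n → Δ → ℝ, (∀ w δ, 0 ≤ q w δ) → (∀ w, ∑ δ, q w δ = 1) →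
    ∃ q'' : Fin n → Δ → ℝ, (∀ w δ, 0 ≤ q'' w δ) ∧ (∀ w, ∑ δ, q'' w δ = 1) ∧
      (∀ w ∈ S, w ≠ u → ∃ δ, q'' w = fun j => if δ = j then (1:ℝ) else 0) ∧
      q'' u = q u ∧ Nfun b u d q ≤ Nfun b u d q'' := by
  induction S using Finset.induction_on with
  | empty => intro q hq hqs; exact ⟨q, hq, hqs, by simp, rfl, le_refl _⟩
  | @insert a S ha ih =>
    intro q hq hqs
    obtain ⟨q₁, h1, h2, h3, h4, h5⟩ := ih q hq hqs
    by_cases hau : a = u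
    · refine ⟨q₁, h1, h2, ?_, h4, h5⟩
      intro w hw hwu
      rcases Finset.mem_insert.1 hw with rfl | hwS
      · exact absurd hau hwu
      · exact h3 w hwS hwu
    · obtain ⟨δ, hδ⟩ := step b hb0 hb1 u d q₁ h1 h2 a
      refine ⟨Function.update q₁ a (fun j => if δ = j then (1:ℝ) else 0),
        ?_, ?_, ?_, ?_, h5.trans hδ⟩
      · intro w δ'
        rcases eq_or_ne w a with rfl | hw
        · simp only [Function.update_self]
          split <;> norm_num
        · rw [Function.update_of_ne hw]; exact h1 w δ'
      · intro w
        rcases eq_or_ne w a with rfl | hw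
        · simp [Function.update_self]
        · rw [Function.update_of_ne hw]; exact h2 w
      · intro w hw hwu
        rcases Finset.mem_insert.1 hw with rfl | hwS
        · exact ⟨δ, Function.update_self _ _ _⟩
        · have hwa : w ≠ a := fun h => ha (h ▸ hwS)
          rw [Function.update_of_ne hwa]; exact h3 w hwS hwu
      · rw [Function.update_of_ne (fun h => hau h.symm)]; exact h4

end Stmt4Aux


/-- Lemma 2 (extreme points): with user `u`'s distribution `pu` fixed, a maximum of the
expected posterior probability `E[Ψ | X_D(u)=d]` over the destination distributions of
the other users is attained at a vector of distributions where every user `v ≠ u`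
deterministically chooses a single destination. -/
theorem stmt_4 {n : ℕ} {Δ : Type} [Fintype Δ] [DecidableEq Δ]
    (pu : Δ → ℝ) (hpu0 : ∀ δ, 0 ≤ pu δ) (hpu1 : ∑ δ, pu δ = 1)
    (b : ℝ) (hb0 : 0 < b) (hb1 : b < 1) (u : Fin n) (d : Δ) (hd : 0 < pu d) :
    ∃ q : Fin n → Δ → ℝ, q u = pu ∧
      (∀ v, (∀ δ, 0 ≤ q v δ) ∧ ∑ δ, q v δ = 1) ∧
      (∀ v, v ≠ u → ∃ dv, q v dv = 1) ∧
      ∀ q' : Fin n → Δ → ℝ, q' u = pu →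
        (∀ v, (∀ δ, 0 ≤ q' v δ) ∧ ∑ δ, q' v δ = 1) →
        expPost q' b u d ≤ expPost q b u d := by
  classical
  have hb0' : (0:ℝ) ≤ b := le_of_lt hb0
  have hb1' : b ≤ 1 := le_of_lt hb1
  have hΔ : Nonempty Δ := by
    rcases isEmpty_or_nonempty Δ with h | h
    · haveI := h; exact absurd hpu1 (by simp)
    · exact h
  set det : (Fin n → Δ) → (Fin n → Δ → ℝ) :=
    fun f w => if w = u then pu else (fun j => if f w = j then (1:ℝ) else 0) with hdet
  have hdetu : ∀ f, det f u = pu := fun f => by simp [hdet]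
  have hdet0 : ∀ f w δ, 0 ≤ det f w δ := by
    intro f w δ
    by_cases hw : w = u
    · subst hw; rw [hdetu]; exact hpu0 δ
    · simp only [hdet, if_neg hw]
      split <;> norm_num
  have hdets : ∀ f w, ∑ δ, det f w δ = 1 := by
    intro f w
    by_cases hw : w = u
    · subst hw; rw [hdetu]; exact hpu1
    · simp only [hdet, if_neg hw]
      simp
  obtain ⟨f₀, -, hf₀⟩ := Finset.exists_max_image (Finset.univ : Finset (Fin n → Δ))
    (fun f => Stmt4Aux.Nfun b u d (det f)) ⟨Classical.arbitrary _, Finset.mem_univ _⟩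
  refine ⟨det f₀, hdetu f₀, fun v => ⟨fun δ => hdet0 f₀ v δ, hdets f₀ v⟩, ?_, ?_⟩
  · intro v hv
    exact ⟨f₀ v, by simp [hdet, hv]⟩
  · intro q' hq'u hq's
    have hq'0 : ∀ w δ, 0 ≤ q' w δ := fun w => (hq's w).1
    have hq'1 : ∀ w, ∑ δ, q' w δ = 1 := fun w => (hq's w).2
    obtain ⟨q'', h1, h2, h3, h4, h5⟩ :=
      Stmt4Aux.allstep b hb0' hb1' u d Finset.univ q' hq'0 hq'1
    set f : Fin n → Δ := fun w =>
      if h : w = u then Classical.arbitrary Δ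
      else Classical.choose (h3 w (Finset.mem_univ w) h) with hfdef
    have hqf : det f = q'' := by
      funext w
      by_cases hw : w = u
      · subst hw
        rw [hdetu, h4, hq'u]
      · have hspec := Classical.choose_spec (h3 w (Finset.mem_univ w) hw)
        have hfw : f w = Classical.choose (h3 w (Finset.mem_univ w) hw) := by
          rw [hfdef]; exact dif_neg hw
        simp only [hdet, if_neg hw, hfw]
        exact hspec.symm
    have hdenom : ∀ r : Fin n → Δ → ℝ, r u = pu → (∀ w, ∑ δ, r w δ = 1) →
        expPost r b u d = Stmt4Aux.Nfun b u d r / pu d := by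
      intro r hru hrs
      unfold expPost Stmt4Aux.Nfun
      rw [Stmt4Aux.denom_eq b u d r hrs, hru]
    rw [hdenom q' hq'u hq'1, hdenom (det f₀) (hdetu f₀) (hdets f₀)]
    have hN : Stmt4Aux.Nfun b u d q' ≤ Stmt4Aux.Nfun b u d (det f₀) := by
      refine h5.trans ?_
      rw [← hqf]
      exact hf₀ f (Finset.mem_univ f)
    gcongr
end

section
/- Threshold for which worst case dominates: for b ∈ (0,1) and p_d ∈ (b/(1+b), 1], the α=1 limit b(1−b)p_d + b² + (1−b)·p_d/(1−b+p_d b) is at least the α=0 limit b(1−b)p_d + b² + (1−b)·(b + (1−b)²p_d/(1−b+p_min·b)) if and only if p_min ≥ (1−b)(1−p_d)²/(p_d(1+b) − b), where p_min ∈ [0, 1−p_d]. -/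
/-- Threshold for which worst case dominates: for `b ∈ (0,1)` and
`p_d ∈ (b/(1+b), 1]`, `p_min ∈ [0, 1−p_d]`, the `α = 1` limit dominates the `α = 0`
limit if and only if `p_min ≥ (1−b)(1−p_d)²/(p_d(1+b) − b)`. -/
theorem stmt_14 (b : ℝ) (hb0 : 0 < b) (hb1 : b < 1)
    (p_d : ℝ) (hpd0 : b / (1 + b) < p_d) (hpd1 : p_d ≤ 1)
    (p_min : ℝ) (hpmin0 : 0 ≤ p_min) (hpmin1 : p_min ≤ 1 - p_d) :
    (b * (1 - b) * p_d + b ^ 2 + (1 - b) *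
        (b + (1 - b) ^ 2 * p_d / (1 - b + p_min * b)) ≤
      b * (1 - b) * p_d + b ^ 2 + (1 - b) * (p_d / (1 - b + p_d * b))) ↔
      (1 - b) * (1 - p_d) ^ 2 / (p_d * (1 + b) - b) ≤ p_min := by
  have h1b : (0:ℝ) < 1 - b := by linarith
  have hC : 0 < p_d * (1 + b) - b := by
    have := (div_lt_iff₀ (by linarith : (0:ℝ) < 1 + b)).mp hpd0
    linarith
  have hD1 : 0 < 1 - b + p_min * b := by nlinarith
  have hD2 : 0 < 1 - b + p_d * b := by nlinarith
  set x := (1 - b) ^ 2 * p_d / (1 - b + p_min * b) with hxdef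
  set y := p_d / (1 - b + p_d * b) with hydef
  have hx : x * (1 - b + p_min * b) = (1 - b) ^ 2 * p_d :=
    div_mul_cancel₀ _ hD1.ne'
  have hy : y * (1 - b + p_d * b) = p_d := div_mul_cancel₀ _ hD2.ne'
  have key : (1 - b + p_min * b) * (1 - b + p_d * b) * (y - (b + x)) =
      b * (1 - b) * (p_min * (p_d * (1 + b) - b) - (1 - b) * (1 - p_d) ^ 2) := by
    linear_combination (1 - b + p_min * b) * hy - (1 - b + p_d * b) * hx
  rw [div_le_iff₀ hC]
  constructor
  · intro h
    have h' : b + x ≤ y := by nlinarith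
    have h1 : 0 ≤ (1 - b + p_min * b) * (1 - b + p_d * b) * (y - (b + x)) :=
      mul_nonneg (mul_pos hD1 hD2).le (by linarith)
    rw [key] at h1
    nlinarith [mul_pos hb0 h1b]
  · intro h
    have h2 : 0 ≤ b * (1 - b) *
        (p_min * (p_d * (1 + b) - b) - (1 - b) * (1 - p_d) ^ 2) :=
      mul_nonneg (mul_pos hb0 h1b).le (by linarith)
    rw [← key] at h2
    nlinarith [mul_pos hD1 hD2]
end

section
/- Second-derivative sign of the worst-case coefficient: for reals s₁, s₂ ≥ 0, integer 0 ≤ m ≤ s₁+s₂, probabilities p_i, p_j ≥ 0 with p_i+p_j ≤ 1, and β = 1−p_i−p_j ≥ 0, the function c(t) = (s₁+1−t)(s₂+1−m+t) / (p_i(s₁+1)(s₂+1−m+t) + p_j(s₂+1)(s₁+1−t) + β(s₁+1−t)(s₂+1−m+t)) is concave in t on the interval where the denominator is positive and the factors (s₁+1−t), (s₂+1−m+t) are nonnegative. -/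
open Set

/-!
With `u = A - t`, `v = B + t` and `D = a v + b u + β u v`, the quotient rule gives
`(u v / D)' = (b u² - a v²) / D²` and then
`(u v / D)'' = -2 (a b (u + v)² + β (a v³ + b u³)) / D³`,
which is `≤ 0` as soon as `a, b, β, u, v ≥ 0` and `D > 0`. The domain is convex because `D` is
concave in `t` when `β ≥ 0`.
For the theorem, `a = p_i (s₁ + 1)`, `b = p_j (s₂ + 1)`, `A = s₁ + 1` and `B = s₂ + 1 - m`.
-/

section AffineRatio

variable {a b β A B : ℝ}

lemma hasDerivAt_const_sub_id (x : ℝ) : HasDerivAt (fun t => A - t) (-1) x := by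
  simpa using (hasDerivAt_id x).const_sub A

lemma hasDerivAt_const_add_id (x : ℝ) : HasDerivAt (fun t => B + t) 1 x := by
  simpa using (hasDerivAt_id x).const_add B

lemma hasDerivAt_affine_denom (x : ℝ) :
    HasDerivAt (fun t => a * (B + t) + b * (A - t) + β * (A - t) * (B + t))
      (a - b + β * (A - B - 2 * x)) x := by
  have hu := hasDerivAt_const_sub_id (A := A) x
  have hv := hasDerivAt_const_add_id (B := B) x
  refine (((hv.const_mul a).add (hu.const_mul b)).add ((hu.const_mul β).mul hv)).congr_deriv ?_
  ring

lemma hasDerivAt_affine_ratio {x : ℝ}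
    (hD : a * (B + x) + b * (A - x) + β * (A - x) * (B + x) ≠ 0) :
    HasDerivAt (fun t => (A - t) * (B + t) / (a * (B + t) + b * (A - t) + β * (A - t) * (B + t)))
      ((b * (A - x) ^ 2 - a * (B + x) ^ 2) /
        (a * (B + x) + b * (A - x) + β * (A - x) * (B + x)) ^ 2) x := by
  refine (((hasDerivAt_const_sub_id x).mul (hasDerivAt_const_add_id x)).div
    (hasDerivAt_affine_denom x) hD).congr_deriv ?_
  simp only [Pi.mul_apply]
  ring

lemma hasDerivAt_affine_ratio_deriv {x : ℝ}
    (hD : a * (B + x) + b * (A - x) + β * (A - x) * (B + x) ≠ 0) :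
    HasDerivAt (fun t => (b * (A - t) ^ 2 - a * (B + t) ^ 2) /
        (a * (B + t) + b * (A - t) + β * (A - t) * (B + t)) ^ 2)
      (-2 * (a * b * (A + B) ^ 2 + β * (a * (B + x) ^ 3 + b * (A - x) ^ 3)) /
        (a * (B + x) + b * (A - x) + β * (A - x) * (B + x)) ^ 3) x := by
  have hu := hasDerivAt_const_sub_id (A := A) x
  have hv := hasDerivAt_const_add_id (B := B) x
  refine ((((hu.pow 2).const_mul b).sub ((hv.pow 2).const_mul a)).div
    ((hasDerivAt_affine_denom x).pow 2) (pow_ne_zero 2 hD)).congr_deriv ?_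
  simp only [Pi.pow_apply, Pi.sub_apply]
  rw [div_eq_div_iff (pow_ne_zero 2 (pow_ne_zero 2 hD)) (pow_ne_zero 3 hD)]
  ring

lemma concaveOn_affine_denom (s : Set ℝ) (hs : Convex ℝ s) (hβ : 0 ≤ β) :
    ConcaveOn ℝ s (fun t => a * (B + t) + b * (A - t) + β * (A - t) * (B + t)) := by
  refine ⟨hs, fun x _ y _ μ ν hμ hν hμν => ?_⟩
  obtain rfl : ν = 1 - μ := by linarith
  have hgap : 0 ≤ β * μ * (1 - μ) * (x - y) ^ 2 := by positivity
  simp only [smul_eq_mul]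
  linear_combination hgap

lemma setOf_affine_denom_pos_eq :
    {t : ℝ | 0 ≤ A - t ∧ 0 ≤ B + t ∧ 0 < a * (B + t) + b * (A - t) + β * (A - t) * (B + t)} =
      {t ∈ Icc (-B) A | 0 < a * (B + t) + b * (A - t) + β * (A - t) * (B + t)} := by
  ext t
  simp only [mem_ofPred_eq, mem_Icc, sub_nonneg, neg_le_iff_add_nonneg', and_assoc]
  rw [and_left_comm]

theorem concaveOn_affine_ratio (ha : 0 ≤ a) (hb : 0 ≤ b) (hβ : 0 ≤ β) :
    ConcaveOn ℝ
      {t : ℝ | 0 ≤ A - t ∧ 0 ≤ B + t ∧ 0 < a * (B + t) + b * (A - t) + β * (A - t) * (B + t)}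
      (fun t => (A - t) * (B + t) / (a * (B + t) + b * (A - t) + β * (A - t) * (B + t))) := by
  rw [setOf_affine_denom_pos_eq]
  set S := {t ∈ Icc (-B) A | 0 < a * (B + t) + b * (A - t) + β * (A - t) * (B + t)}
  have hint : ∀ x ∈ interior S,
      x ∈ Ioo (-B) A ∧ 0 < a * (B + x) + b * (A - x) + β * (A - x) * (B + x) :=
    fun x hx => ⟨interior_Icc.subset (interior_mono (sep_subset _ _) hx), (interior_subset hx).2⟩
  refine concaveOn_of_hasDerivWithinAt2_nonpos
    ((concaveOn_affine_denom _ (convex_Icc _ _) hβ).convex_gt 0)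
    (ContinuousOn.div (by fun_prop) (by fun_prop) fun x hx => hx.2.ne')
    (fun x hx => (hasDerivAt_affine_ratio (hint x hx).2.ne').hasDerivWithinAt)
    (fun x hx => (hasDerivAt_affine_ratio_deriv (hint x hx).2.ne').hasDerivWithinAt) ?_
  intro x hx
  obtain ⟨⟨hBx, hxA⟩, hD⟩ := hint x hx
  have hu : 0 ≤ A - x := by linarith
  have hv : 0 ≤ B + x := by linarith
  refine div_nonpos_of_nonpos_of_nonneg ?_ (pow_nonneg hD.le 3)
  have : 0 ≤ a * b * (A + B) ^ 2 + β * (a * (B + x) ^ 3 + b * (A - x) ^ 3) := by positivity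
  linarith

end AffineRatio

theorem stmt_17_general (s₁ s₂ : ℝ) (hs₁ : 0 ≤ s₁) (hs₂ : 0 ≤ s₂)
    (m : ℕ)
    (p_i p_j β : ℝ) (hpi : 0 ≤ p_i) (hpj : 0 ≤ p_j) (hsum : p_i + p_j ≤ 1)
    (hβ : β = 1 - p_i - p_j) :
    ConcaveOn ℝ
      {t : ℝ | 0 ≤ s₁ + 1 - t ∧ 0 ≤ s₂ + 1 - m + t ∧
        0 < p_i * (s₁ + 1) * (s₂ + 1 - m + t) + p_j * (s₂ + 1) * (s₁ + 1 - t) +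
          β * (s₁ + 1 - t) * (s₂ + 1 - m + t)}
      (fun t => (s₁ + 1 - t) * (s₂ + 1 - m + t) /
        (p_i * (s₁ + 1) * (s₂ + 1 - m + t) + p_j * (s₂ + 1) * (s₁ + 1 - t) +
          β * (s₁ + 1 - t) * (s₂ + 1 - m + t))) :=
  concaveOn_affine_ratio (mul_nonneg hpi (by linarith)) (mul_nonneg hpj (by linarith))
    (by linarith)

/-- Concavity of the worst-case coefficient (Lemma 2): the function
`c(t) = (s₁+1−t)(s₂+1−m+t)/(p_i(s₁+1)(s₂+1−m+t) + p_j(s₂+1)(s₁+1−t) + β(s₁+1−t)(s₂+1−m+t))`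
is concave in `t` on the set where the factors are nonnegative and the denominator is
positive. -/
theorem stmt_17 (s₁ s₂ : ℝ) (hs₁ : 0 ≤ s₁) (hs₂ : 0 ≤ s₂)
    (m : ℕ) (hm : (m : ℝ) ≤ s₁ + s₂)
    (p_i p_j β : ℝ) (hpi : 0 ≤ p_i) (hpj : 0 ≤ p_j) (hsum : p_i + p_j ≤ 1)
    (hβ : β = 1 - p_i - p_j) :
    ConcaveOn ℝ
      {t : ℝ | 0 ≤ s₁ + 1 - t ∧ 0 ≤ s₂ + 1 - m + t ∧
        0 < p_i * (s₁ + 1) * (s₂ + 1 - m + t) + p_j * (s₂ + 1) * (s₁ + 1 - t) +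
          β * (s₁ + 1 - t) * (s₂ + 1 - m + t)}
      (fun t => (s₁ + 1 - t) * (s₂ + 1 - m + t) /
        (p_i * (s₁ + 1) * (s₂ + 1 - m + t) + p_j * (s₂ + 1) * (s₁ + 1 - t) +
          β * (s₁ + 1 - t) * (s₂ + 1 - m + t))) :=
  stmt_17_general s₁ s₂ hs₁ hs₂ m p_i p_j β hpi hpj hsum hβ
end
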